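/- arXiv:1712.04689 — 6 statements merged into one kernel-verified Lean document; each statement's English description precedes it below -/
import Mathlib

section
/- Let Q > 0, N > 0, and define F(m, x) = m·ln(x + 1) − √m·(√(x(x+2))/(x+1))·Q − N·ln 2. Then the partial derivative of F with respect to m, namely F_m = ln(x+1) − (Q/(2√m))·(√(x(x+2))/(x+1)), is strictly positive for all m > 0 and x > 0 satisfying F(m, x) = 0. -/
theorem Fm_pos (Q N m x : ℝ) (hQ : 0 < Q) (hN : 0 < N) (hm : 0 < m) (hx : 0 < x)
    (hF : m * Real.log (x + 1)
        - Real.sqrt m * (Real.sqrt (x * (x + 2)) / (x + 1)) * Q - N * Real.log 2 = 0) :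
    0 < Real.log (x + 1) - Q / (2 * Real.sqrt m) * (Real.sqrt (x * (x + 2)) / (x + 1)) := by
  set s := Real.sqrt m with hsdef
  set S := Real.sqrt (x * (x + 2)) / (x + 1) with hSdef
  set L := Real.log (x + 1) with hLdef
  have hs : 0 < s := Real.sqrt_pos.mpr hm
  have hS : 0 ≤ S := by
    apply div_nonneg (Real.sqrt_nonneg _); linarith
  have hln2 : 0 < Real.log 2 := Real.log_pos (by norm_num)
  have hm2 : s * s = m := Real.mul_self_sqrt hm.le
  have key : 0 < m * (L - Q / (2 * s) * S) := by
    have h1 : m * (Q / (2 * s) * S) = s * Q * S / 2 := by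
      rw [← hm2]; field_simp
    have h2 : m * L = s * S * Q + N * Real.log 2 := by linarith
    have h3 : 0 ≤ s * Q * S := by positivity
    have h4 : 0 < N * Real.log 2 := by positivity
    nlinarith [h1, h2, h3, h4]
  nlinarith [key, mul_pos hm (lt_of_not_ge (fun h => absurd key (not_lt.mpr (mul_nonpos_of_nonneg_of_nonpos hm.le h))))]
end

section
/- Let Q > 0 and define F(m, x) = m·ln(x + 1) − √m·(√(x(x+2))/(x+1))·Q − N·ln 2 with N > 0. For fixed x > 0, the partial derivative F_x = m/(x+1) − Q·√m / ((x+1)²·√(x(x+2))) is strictly positive for all pairs (m, x) with m > 0, x > 0 satisfying F(m, x) = 0. -/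
theorem Fx_pos (Q N m x : ℝ) (hQ : 0 < Q) (hN : 0 < N) (hm : 0 < m) (hx : 0 < x)
    (hF : m * Real.log (x + 1)
        - Real.sqrt m * (Real.sqrt (x * (x + 2)) / (x + 1)) * Q - N * Real.log 2 = 0) :
    0 < m / (x + 1) - Q * Real.sqrt m / ((x + 1) ^ 2 * Real.sqrt (x * (x + 2))) := by
  set s := Real.sqrt m with hs
  set t := Real.sqrt (x * (x + 2)) with ht
  have hx1 : (0:ℝ) < x + 1 := by linarith
  have hs0 : 0 < s := Real.sqrt_pos.mpr hm
  have ht0 : 0 < t := Real.sqrt_pos.mpr (by nlinarith)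
  have hss : s * s = m := Real.mul_self_sqrt hm.le
  have htt : t * t = x * (x + 2) := Real.mul_self_sqrt (by nlinarith)
  have hL0 : 0 < Real.log (x + 1) := Real.log_pos (by linarith)
  have h2 : 0 < Real.log 2 := Real.log_pos (by norm_num)
  set L := Real.log (x + 1) with hLdef
  -- from constraint: m * L > s * t * Q / (x+1)
  have h1 : s * (t / (x + 1)) * Q < m * L := by nlinarith [mul_pos hN h2]
  -- hence s * L * (x+1) > t * Q
  have h3 : t * Q < s * L * (x + 1) := by
    have h1' : s * (t / (x + 1) * Q) < s * (s * L) := by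
      calc s * (t / (x + 1) * Q) = s * (t / (x + 1)) * Q := by ring
        _ < m * L := h1
        _ = s * (s * L) := by rw [← hss]; ring
    have h4 : t / (x + 1) * Q < s * L := (mul_lt_mul_iff_right₀ hs0).mp h1'
    have := mul_lt_mul_of_pos_right h4 hx1
    have hd : t / (x + 1) * Q * (x + 1) = t * Q := by field_simp
    linarith [hd ▸ this]
  -- L < t*t
  have hLt : L < t * t := by
    have := Real.log_lt_sub_one_of_pos hx1 (by linarith)
    rw [htt]; nlinarith
  -- key: Q < s * (x+1) * t
  have hkey : Q < s * (x + 1) * t := by nlinarith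
  -- conclude
  rw [sub_pos, div_lt_div_iff₀ (by positivity) hx1]
  rw [← hss]
  nlinarith [mul_pos (mul_pos hs0 hx1) ht0, sq_nonneg (x+1)]
end

section
/- For fixed x̄ > 0, Q > 0, N > 0, the value m̄ = [ (1/(2·log₂(1+x̄))) · ( (Q/ln 2)·√(1 − 1/(x̄+1)²) + √( (1 − 1/(x̄+1)²)·(Q/ln 2)² + 4N·log₂(1+x̄) ) ) ]² satisfies the finite-blocklength capacity equation N/m̄ = log₂(1 + x̄) − √( (1/m̄)·(1 − 1/(x̄+1)²) )·(Q/ln 2). -/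
set_option maxHeartbeats 1000000


theorem closed_form_inverse (x Q N : ℝ) (hx : 0 < x) (hQ : 0 < Q) (hN : 0 < N) :
    let m : ℝ := (1 / (2 * Real.logb 2 (1 + x)) *
      (Q / Real.log 2 * Real.sqrt (1 - 1 / (x + 1) ^ 2)
        + Real.sqrt ((1 - 1 / (x + 1) ^ 2) * (Q / Real.log 2) ^ 2
            + 4 * N * Real.logb 2 (1 + x)))) ^ 2
    N / m = Real.logb 2 (1 + x)
        - Real.sqrt (1 / m * (1 - 1 / (x + 1) ^ 2)) * (Q / Real.log 2) := by
  intro m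
  have h1 : (1:ℝ) < 1 + x := by linarith
  have hC : 0 < Real.logb 2 (1 + x) := Real.logb_pos one_lt_two h1
  set C := Real.logb 2 (1 + x) with hCdef
  have hx1 : (0:ℝ) < x + 1 := by linarith
  have hV : 0 < 1 - 1 / (x + 1) ^ 2 := by
    have h2 : 1 / (x + 1) ^ 2 < 1 := by
      rw [div_lt_one (by positivity)]; nlinarith
    linarith
  set V := 1 - 1 / (x + 1) ^ 2 with hVdef
  have ha : 0 < Q / Real.log 2 := div_pos hQ (Real.log_pos one_lt_two)
  set a := Q / Real.log 2 with hadef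
  set b := a * Real.sqrt V with hbdef
  have hb : 0 < b := mul_pos ha (Real.sqrt_pos.2 hV)
  have hr2 : 0 < V * a ^ 2 + 4 * N * C := by positivity
  set r := Real.sqrt (V * a ^ 2 + 4 * N * C) with hrdef
  have hr : 0 < r := Real.sqrt_pos.2 hr2
  have hrsq : r ^ 2 = V * a ^ 2 + 4 * N * C := Real.sq_sqrt hr2.le
  have hbsq : b ^ 2 = a ^ 2 * V := by
    rw [hbdef, mul_pow, Real.sq_sqrt hV.le]
  set s := 1 / (2 * C) * (b + r) with hsdef
  have hs : 0 < s := by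
    rw [hsdef]; positivity
  have hm : m = s ^ 2 := rfl
  -- key quadratic identity
  have hkey : C * s ^ 2 - b * s = N := by
    have h2Cs : 2 * C * s = b + r := by
      rw [hsdef]; field_simp
    have hsq : (2 * C * s - b) ^ 2 = r ^ 2 := by rw [h2Cs]; ring
    rw [hrsq] at hsq
    have hC' : (C:ℝ) ≠ 0 := ne_of_gt hC
    nlinarith [hsq, hbsq, hC]
  -- simplify the sqrt
  have hsqrt : Real.sqrt (1 / m * V) = Real.sqrt V / s := by
    rw [hm, show 1 / s ^ 2 * V = V / s ^ 2 by ring,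
      Real.sqrt_div hV.le, Real.sqrt_sq hs.le]
  rw [hm, hsqrt]
  have hs' : s ≠ 0 := ne_of_gt hs
  field_simp
  nlinarith [hkey, hs, sq_nonneg s]
end

section
/- Suppose γ₁, γ₂ > 0 with γ₁·γ₂ < 1, and h₁, h₂ > 0. Then p₁ = (γ₁·h₂² + γ₁·γ₂·h₁²)/(h₁²·h₂²·(1 − γ₁γ₂)) and p₂ = (γ₂·h₁² + γ₁·γ₂·h₂²)/(h₁²·h₂²·(1 − γ₁γ₂)) are the unique nonnegative solutions of the system γ₁ = p₁·h₁²/(p₂·h₁² + 1) and γ₂ = p₂·h₂²/(p₁·h₂² + 1). -/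
/-- Cleared of denominators, the SINR equations are linear in `(p₁, p₂)` with determinant
`g₁ g₂ (1 - γ₁ γ₂)`; the right-hand side is Cramer's rule. -/
theorem mutual_interference_system_iff {K : Type*} [Field K] {γ₁ γ₂ g₁ g₂ p₁ p₂ : K}
    (hg₁ : g₁ ≠ 0) (hg₂ : g₂ ≠ 0) (hdet : 1 - γ₁ * γ₂ ≠ 0) :
    (γ₁ * (p₂ * g₁ + 1) = p₁ * g₁ ∧ γ₂ * (p₁ * g₂ + 1) = p₂ * g₂) ↔
      (p₁ = (γ₁ * g₂ + γ₁ * γ₂ * g₁) / (g₁ * g₂ * (1 - γ₁ * γ₂)) ∧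
        p₂ = (γ₂ * g₁ + γ₁ * γ₂ * g₂) / (g₁ * g₂ * (1 - γ₁ * γ₂))) := by
  have hD : g₁ * g₂ * (1 - γ₁ * γ₂) ≠ 0 := mul_ne_zero (mul_ne_zero hg₁ hg₂) hdet
  simp only [eq_div_iff hD]
  constructor
  · rintro ⟨e₁, e₂⟩
    exact ⟨by linear_combination -g₂ * e₁ - γ₁ * g₁ * e₂,
      by linear_combination -g₁ * e₂ - γ₂ * g₂ * e₁⟩
  · rintro ⟨e₁, e₂⟩
    refine ⟨mul_right_cancel₀ hD ?_, mul_right_cancel₀ hD ?_⟩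
    · linear_combination γ₁ * g₁ * e₂ - g₁ * e₁
    · linear_combination γ₂ * g₂ * e₁ - g₂ * e₂

theorem power_alloc_mutual_general (γ₁ γ₂ h₁ h₂ : ℝ)
    (hprod : γ₁ * γ₂ < 1) (hh₁ : 0 < h₁) (hh₂ : 0 < h₂) (p₁ p₂ : ℝ)
    (hp₁ : 0 ≤ p₁) (hp₂ : 0 ≤ p₂) :
    (γ₁ = p₁ * h₁ ^ 2 / (p₂ * h₁ ^ 2 + 1) ∧ γ₂ = p₂ * h₂ ^ 2 / (p₁ * h₂ ^ 2 + 1))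
      ↔ (p₁ = (γ₁ * h₂ ^ 2 + γ₁ * γ₂ * h₁ ^ 2) / (h₁ ^ 2 * h₂ ^ 2 * (1 - γ₁ * γ₂)) ∧
         p₂ = (γ₂ * h₁ ^ 2 + γ₁ * γ₂ * h₂ ^ 2) / (h₁ ^ 2 * h₂ ^ 2 * (1 - γ₁ * γ₂))) := by
  have hd₁ : p₂ * h₁ ^ 2 + 1 ≠ 0 := by positivity
  have hd₂ : p₁ * h₂ ^ 2 + 1 ≠ 0 := by positivity
  rw [eq_div_iff hd₁, eq_div_iff hd₂]
  exact mutual_interference_system_iff (by positivity) (by positivity) (by linarith)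

theorem power_alloc_mutual (γ₁ γ₂ h₁ h₂ : ℝ) (hγ₁ : 0 < γ₁) (hγ₂ : 0 < γ₂)
    (hprod : γ₁ * γ₂ < 1) (hh₁ : 0 < h₁) (hh₂ : 0 < h₂) (p₁ p₂ : ℝ)
    (hp₁ : 0 ≤ p₁) (hp₂ : 0 ≤ p₂) :
    (γ₁ = p₁ * h₁ ^ 2 / (p₂ * h₁ ^ 2 + 1) ∧ γ₂ = p₂ * h₂ ^ 2 / (p₁ * h₂ ^ 2 + 1))
      ↔ (p₁ = (γ₁ * h₂ ^ 2 + γ₁ * γ₂ * h₁ ^ 2) / (h₁ ^ 2 * h₂ ^ 2 * (1 - γ₁ * γ₂)) ∧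
         p₂ = (γ₂ * h₁ ^ 2 + γ₁ * γ₂ * h₂ ^ 2) / (h₁ ^ 2 * h₂ ^ 2 * (1 - γ₁ * γ₂))) :=
  power_alloc_mutual_general γ₁ γ₂ h₁ h₂ hprod hh₁ hh₂ p₁ p₂ hp₁ hp₂
end

section
/- Let Q > 0, N > 0, and let m(x) = ((√(x(x+2))·Q + c(x))/(2(x+1)ln(x+1)))², where c(x) = √(x(x+2)Q² + 4(x+1)²ln(x+1)·N·ln 2). Then m is a strictly decreasing function of x on (0, ∞). -/
/-!
Write `K = N log 2`, `L = log (x + 1)` and `b = Q √(x (x + 2)) / ((x + 1) L)`. Then `√m` is the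
positive root `(b + √(b ^ 2 + 4 K / L)) / 2` of `t ^ 2 - b t - K / L`, the blocklength constraint
divided by `L`. This root is increasing in `b ≥ 0` and in `K / L`; both decrease strictly with `x`,
`b` because its derivative has the sign of `log (1 + x) - x (x + 2) < 0`.
-/

open Real Set

lemma hasDerivAt_sqrt_mul_add_two {z : ℝ} (hz : 0 < z) :
    HasDerivAt (fun w : ℝ => √(w * (w + 2))) ((z + 1) / √(z * (z + 2))) z := by
  have hpoly : HasDerivAt (fun w : ℝ => w * (w + 2)) (2 * (z + 1)) z :=
    ((hasDerivAt_id' z).fun_mul ((hasDerivAt_id' z).add_const 2)).congr_deriv (by ring)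
  convert hpoly.sqrt (by positivity) using 1
  rw [mul_div_mul_left _ _ two_ne_zero]

lemma hasDerivAt_add_one_mul_log_add_one {z : ℝ} (hz : -1 < z) :
    HasDerivAt (fun w : ℝ => (w + 1) * log (w + 1)) (log (z + 1) + 1) z := by
  have h1 : HasDerivAt (fun w : ℝ => w + 1) 1 z := (hasDerivAt_id' z).add_const 1
  exact (h1.fun_mul (h1.log (by linarith))).congr_deriv
    (by rw [mul_one_div_cancel (by linarith), one_mul])

lemma strictAntiOn_sqrt_mul_add_two_div :
    StrictAntiOn (fun z : ℝ => √(z * (z + 2)) / ((z + 1) * log (z + 1))) (Ioi 0) := by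
  have hden : ∀ z ∈ Ioi (0 : ℝ), 0 < (z + 1) * log (z + 1) := fun z (hz : 0 < z) =>
    mul_pos (by linarith) (log_pos (by linarith))
  have hderiv : ∀ z ∈ Ioi (0 : ℝ), HasDerivAt (fun z : ℝ => √(z * (z + 2)) / ((z + 1) * log (z + 1)))
      (((z + 1) / √(z * (z + 2)) * ((z + 1) * log (z + 1))
        - √(z * (z + 2)) * (log (z + 1) + 1)) / ((z + 1) * log (z + 1)) ^ 2) z :=
    fun z hz => (hasDerivAt_sqrt_mul_add_two hz).fun_div
      (hasDerivAt_add_one_mul_log_add_one (by linarith [mem_Ioi.1 hz])) (hden z hz).ne'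
  refine strictAntiOn_of_deriv_neg (convex_Ioi 0)
    (fun z hz => (hderiv z hz).continuousAt.continuousWithinAt) ?_
  rw [interior_Ioi]
  intro z (hz : 0 < z)
  rw [(hderiv z hz).deriv]
  refine div_neg_of_neg_of_pos ?_ (pow_pos (hden z hz) 2)
  have hsq : √(z * (z + 2)) ^ 2 = z * (z + 2) := sq_sqrt (by positivity)
  have hnum : (z + 1) / √(z * (z + 2)) * ((z + 1) * log (z + 1))
      - √(z * (z + 2)) * (log (z + 1) + 1) = (log (z + 1) - z * (z + 2)) / √(z * (z + 2)) := by
    field_simp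
    linear_combination (-(log (z + 1) + 1)) * hsq
  have hlog : log (z + 1) ≤ z := by linarith [log_le_sub_one_of_pos (by linarith : 0 < z + 1)]
  rw [hnum]
  exact div_neg_of_neg_of_pos (by nlinarith) (sqrt_pos.2 (by positivity))

lemma add_sqrt_sq_add_lt_add_sqrt_sq_add {b₁ b₂ c₁ c₂ : ℝ} (hb₁ : 0 ≤ b₁) (hb : b₁ < b₂)
    (hc : c₁ ≤ c₂) : b₁ + √(b₁ ^ 2 + c₁) < b₂ + √(b₂ ^ 2 + c₂) := by
  have : b₁ ^ 2 + c₁ ≤ b₂ ^ 2 + c₂ := by nlinarith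
  linarith [sqrt_le_sqrt this]

lemma add_sqrt_div_two_mul {D : ℝ} (hD : 0 ≤ D) (p q : ℝ) :
    (p + √q) / (2 * D) = (p / D + √(q / D ^ 2)) / 2 := by
  rw [sqrt_div' q (sq_nonneg D), sqrt_sq hD]
  ring

theorem m_strictAnti (Q N : ℝ) (hQ : 0 < Q) (hN : 0 < N) :
    StrictAntiOn (fun x : ℝ =>
      ((Real.sqrt (x * (x + 2)) * Q
          + Real.sqrt (x * (x + 2) * Q ^ 2
              + 4 * (x + 1) ^ 2 * Real.log (x + 1) * (N * Real.log 2)))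
        / (2 * (x + 1) * Real.log (x + 1))) ^ 2)
      (Set.Ioi (0 : ℝ)) := by
  set K := N * log 2
  have hK : 0 < K := mul_pos hN (log_pos one_lt_two)
  set b : ℝ → ℝ := fun x => Q * (√(x * (x + 2)) / ((x + 1) * log (x + 1)))
  refine StrictAntiOn.congr (f₁ := fun x => ((b x + √(b x ^ 2 + 4 * K / log (x + 1))) / 2) ^ 2)
    ?_ fun x (hx : 0 < x) => ?_
  · intro x (hx : 0 < x) y (hy : 0 < y) hxy
    have hLx : 0 < log (x + 1) := log_pos (by linarith)
    have hLy : 0 < log (y + 1) := log_pos (by linarith)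
    have hby : 0 ≤ b y := by positivity
    have hbxy : b y < b x :=
      mul_lt_mul_of_pos_left (strictAntiOn_sqrt_mul_add_two_div hx hy hxy) hQ
    have hKL : 4 * K / log (y + 1) ≤ 4 * K / log (x + 1) :=
      div_le_div_of_nonneg_left (by positivity) hLx (log_le_log (by linarith) (by linarith))
    exact pow_lt_pow_left₀ (div_lt_div_of_pos_right
      (add_sqrt_sq_add_lt_add_sqrt_sq_add hby hbxy hKL) two_pos) (by positivity) two_ne_zero
  · have hLx : 0 < log (x + 1) := log_pos (by linarith)
    simp only
    rw [mul_assoc 2, add_sqrt_div_two_mul (by positivity)]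
    congr 4
    · simp only [b]; ring
    · simp only [b]; field_simp; rw [sq_sqrt (by positivity)]; ring
end

section
/- For all x > 0, Q > 0, N > 0 with Q ≤ (2√(ln 2)/(4 − √2))·√N, the following inequality holds: (x²(x+2) − 2x·ln(x+1))·Q + (x − (x+1)ln(x+1))·√(x(x+2))·√(x(x+2)Q² + 4N(x+1)²·ln(x+1)·ln 2) < 0. -/
/-!
Write `L = log (x + 1)` and `D = (x + 1) L - x`. Since `D ≥ 0`, the claim follows by squaring from
a polynomial inequality in `x, L, Q, N`, which rests on the identity
`(x²(x+2) - 2xL)² = D² x² (x+2)² + x³ L (x+3) (2x(x+2) - L(x²+3x+4))`.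
The Padé bound `log (1 + x) ≥ 2x/(x+2)` gives both `D (x+2) ≥ x²` and
`(2x(x+2) - L(x²+3x+4)) (x+2) ≤ 2x²`, and the hypothesis on `Q` enters only through
`6 Q² ≤ 4 N log 2`, which holds because `(4 - √2)² > 6`.
-/

open Real

section PadeBound

variable {x L : ℝ}

lemma sq_le_sub_mul_of_two_mul_le (hx : 0 ≤ x) (h : 2 * x ≤ L * (x + 2)) :
    x ^ 2 ≤ ((x + 1) * L - x) * (x + 2) := by
  nlinarith [mul_le_mul_of_nonneg_left h (by linarith : (0 : ℝ) ≤ x + 1)]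

lemma sub_mul_le_two_mul_sq_of_two_mul_le (hx : 0 ≤ x) (h : 2 * x ≤ L * (x + 2)) :
    (2 * x * (x + 2) - L * (x ^ 2 + 3 * x + 4)) * (x + 2) ≤ 2 * x ^ 2 := by
  nlinarith [mul_le_mul_of_nonneg_left h (by positivity : (0 : ℝ) ≤ x ^ 2 + 3 * x + 4)]

lemma sq_mul_lt_of_two_mul_le {Q K : ℝ} (hx : 0 < x) (hL : 0 < L) (h : 2 * x ≤ L * (x + 2))
    (hQ : 2 * Q ^ 2 * (x + 3) < K * (x + 1) ^ 2) :
    ((x ^ 2 * (x + 2) - 2 * x * L) * Q) ^ 2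
      < ((x + 1) * L - x) ^ 2 * (x * (x + 2)) * (x * (x + 2) * Q ^ 2 + K * (x + 1) ^ 2 * L) := by
  have hD := sq_le_sub_mul_of_two_mul_le hx.le h
  have hE := sub_mul_le_two_mul_sq_of_two_mul_le hx.le h
  have hx2 : 0 < x + 2 := by linarith
  suffices Q ^ 2 * (x ^ 3 * L * (x + 3) * (2 * x * (x + 2) - L * (x ^ 2 + 3 * x + 4)))
      < ((x + 1) * L - x) ^ 2 * (x * (x + 2)) * (K * (x + 1) ^ 2 * L) by
    linear_combination this
  rw [← mul_lt_mul_iff_of_pos_right (pow_pos hx2 2)]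
  calc Q ^ 2 * (x ^ 3 * L * (x + 3) * (2 * x * (x + 2) - L * (x ^ 2 + 3 * x + 4))) * (x + 2) ^ 2
      = (Q ^ 2 * x ^ 3 * L * (x + 3) * (x + 2))
          * ((2 * x * (x + 2) - L * (x ^ 2 + 3 * x + 4)) * (x + 2)) := by ring
    _ ≤ (Q ^ 2 * x ^ 3 * L * (x + 3) * (x + 2)) * (2 * x ^ 2) := by gcongr
    _ = (x ^ 5 * L * (x + 2)) * (2 * Q ^ 2 * (x + 3)) := by ring
    _ < (x ^ 5 * L * (x + 2)) * (K * (x + 1) ^ 2) := by gcongr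
    _ = (x * L * (x + 2) * K * (x + 1) ^ 2) * (x ^ 2) ^ 2 := by ring
    _ ≤ (x * L * (x + 2) * K * (x + 1) ^ 2) * (((x + 1) * L - x) * (x + 2)) ^ 2 := by
        have hK : 0 < K := pos_of_mul_pos_left (lt_of_le_of_lt (by positivity) hQ) (by positivity)
        gcongr
    _ = ((x + 1) * L - x) ^ 2 * (x * (x + 2)) * (K * (x + 1) ^ 2 * L) * (x + 2) ^ 2 := by ring

end PadeBound

lemma six_mul_sq_le_of_le_mul_sqrt {Q a b : ℝ} (hQ : 0 ≤ Q) (ha : 0 ≤ a) (hb : 0 ≤ b)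
    (h : Q ≤ 2 * √a / (4 - √2) * √b) :
    6 * Q ^ 2 ≤ 4 * a * b := by
  have hsqrt2 : √2 < 3 / 2 := by
    rw [sqrt_lt' (by norm_num)]
    norm_num
  have hc : 0 < 4 - √2 := by linarith
  have h' : Q * (4 - √2) ≤ 2 * √a * √b := by
    rwa [div_mul_eq_mul_div, le_div_iff₀ hc] at h
  calc 6 * Q ^ 2 ≤ (4 - √2) ^ 2 * Q ^ 2 := by
        gcongr
        nlinarith [sq_sqrt (zero_le_two : (0 : ℝ) ≤ 2)]
    _ = (Q * (4 - √2)) ^ 2 := by ring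
    _ ≤ (2 * √a * √b) ^ 2 := by gcongr
    _ = 4 * a * b := by rw [mul_pow, mul_pow, sq_sqrt ha, sq_sqrt hb]; ring

theorem core_ineq (x Q N : ℝ) (hx : 0 < x) (hQ : 0 < Q) (hN : 0 < N)
    (h : Q ≤ 2 * Real.sqrt (Real.log 2) / (4 - Real.sqrt 2) * Real.sqrt N) :
    (x ^ 2 * (x + 2) - 2 * x * Real.log (x + 1)) * Q
      + (x - (x + 1) * Real.log (x + 1)) * Real.sqrt (x * (x + 2)) *
        Real.sqrt (x * (x + 2) * Q ^ 2 + 4 * N * (x + 1) ^ 2 * Real.log (x + 1) * Real.log 2)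
      < 0 := by
  set L := log (x + 1)
  have hL : 0 < L := log_pos (by linarith)
  have hlog2 : 0 < log 2 := log_pos one_lt_two
  have hpade : 2 * x ≤ L * (x + 2) := by
    have := (lt_log_one_add_of_pos hx).le
    rwa [add_comm 1 x, div_le_iff₀ (by linarith)] at this
  have hD : 0 ≤ (x + 1) * L - x := by
    nlinarith [sq_le_sub_mul_of_two_mul_le hx.le hpade, sq_nonneg x]
  have hQsq := six_mul_sq_le_of_le_mul_sqrt hQ.le hlog2.le hN.le h
  have hQx : 2 * Q ^ 2 * (x + 3) < 4 * N * log 2 * (x + 1) ^ 2 := by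
    nlinarith [mul_pos hx (mul_pos hN hlog2), mul_pos (mul_pos hx hx) (mul_pos hN hlog2)]
  have hsq : ((x ^ 2 * (x + 2) - 2 * x * L) * Q) ^ 2
      < (((x + 1) * L - x) * √(x * (x + 2))
          * √(x * (x + 2) * Q ^ 2 + 4 * N * (x + 1) ^ 2 * L * log 2)) ^ 2 := by
    simp only [mul_pow, sq_sqrt (by positivity : 0 ≤ x * (x + 2)), sq_sqrt (by positivity :
      0 ≤ x * (x + 2) * Q ^ 2 + 4 * N * (x + 1) ^ 2 * L * log 2)]
    linear_combination sq_mul_lt_of_two_mul_le hx hL hpade hQx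
  have := (abs_lt_of_sq_lt_sq hsq (by positivity)).trans_le' (le_abs_self _)
  linear_combination this
end
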